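/- Let X be a Banach space not containing an isomorphic copy of ℓ₁. Then every bounded sequence (x*_n) in X* satisfies ca((x*_n)) ≤ 3·ca_{ρ*}((x*_n)). -/

import Mathlib

/-!
Given `r < ca (x*_n)`, choose for every `m` indices `j m, l m ≥ m` and `z m ∈ B_X` with
`r < |(x*_{j m} - x*_{l m}) (z m)|`. As `X ⊉ ℓ₁`, Rosenthal's theorem gives a weakly Cauchy
subsequence `a p = z (σ p)`. Singletons are weakly compact, so `|(x*_j - x*_l) (a i)| < ca_{ρ*} + ε`
for `j, l ≥ N i`. For `τ i = max (N i) i` the vectors `w i = (a (τ i) - a i) / 2` are weakly null,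
so `{0} ∪ {w i}` is weakly compact and `|(x*_j - x*_l) (w n)| < ca_{ρ*} + ε` for `j, l ≥ n`. The
indices chosen at `m = σ (τ n) ≥ max (N n) n` now give
`r < |(x*_j - x*_l) (2 w n + a n)| < 3 (ca_{ρ*} + ε)`.

Rosenthal's theorem follows the classical route. By the Nash-Williams theorem (Galvin–Prikry
acceptance and rejection, plus fusion), a sequence of pairs of sets `(A n, B n)` in which every
subsequence has a point lying infinitely often in both `A n` and `B n` has a Boolean independent
subsequence. For `A n = {f | f (x n) < r}` and `B n = {f | s < f (x n)}` in `B_{X*}`, independence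
makes `(x n)` equivalent to the unit vector basis of `ℓ₁`. Hence, with no `ℓ₁` in `X`, a diagonal
subsequence over all rational pairs `r < s` has no functional oscillating across any of them.
-/

open Filter Metric Topology Pointwise NormedSpace

set_option maxHeartbeats 1000000
set_option synthInstance.maxHeartbeats 400000

noncomputable section

/-- `ca (x_k) = inf_n diam {x_k : k ≥ n}`: measures how far `(x_k)` is from being norm Cauchy. -/
def ca {Z : Type*} [NormedAddCommGroup Z] (x : ℕ → Z) : ℝ :=
  ⨅ n : ℕ, Metric.diam (x '' Set.Ici n)

/-- `δ (x_k) = sup_{f ∈ B_{Z*}} inf_n diam {f (x_k) : k ≥ n}`: measures how far `(x_k)` is from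
being weakly Cauchy. -/
def qdelta {Z : Type*} [NormedAddCommGroup Z] [NormedSpace ℝ Z] (x : ℕ → Z) : ℝ :=
  ⨆ f : Metric.closedBall (0 : StrongDual ℝ Z) 1,
    ⨅ n : ℕ, Metric.diam ((fun k => (f : StrongDual ℝ Z) (x k)) '' Set.Ici n)

/-- `ca_{ρ*} (x*_n)`: measures how far the sequence `(x*_n)` in `X*` is from being Cauchy in the
Mackey topology of `X*`; the outer supremum runs over all weakly compact subsets `K` of the
closed unit ball of `X`. -/
def caRhoStar {Z : Type*} [NormedAddCommGroup Z] [NormedSpace ℝ Z]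
    (φ : ℕ → StrongDual ℝ Z) : ℝ :=
  sSup { r : ℝ | ∃ K : Set Z,
    K ⊆ Metric.closedBall 0 1 ∧
    IsCompact (show Set (WeakSpace ℝ Z) from K) ∧
    r = ⨅ n : ℕ, ⨆ j : Set.Ici n, ⨆ l : Set.Ici n, ⨆ v : K, |(φ j - φ l) (v : Z)| }

section Fusion

open Finset

lemma Set.finite_diff_sep_forall_lt (N : Set ℕ) (s : Finset ℕ) :
    (N \ {n ∈ N | ∀ m ∈ s, m < n}).Finite := by
  refine (Set.finite_Iic (s.sup id)).subset fun n hn => ?_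
  obtain ⟨m, hm, hnm⟩ : ∃ m ∈ s, n ≤ m := by simpa [hn.1] using hn.2
  exact hnm.trans (le_sup (f := id) hm)

lemma Set.Infinite.sep_forall_lt {N : Set ℕ} (hN : N.Infinite) (s : Finset ℕ) :
    {n ∈ N | ∀ m ∈ s, m < n}.Infinite := by
  simpa [Set.sdiff_sdiff_cancel_left (Set.sep_subset N _)] using
    hN.sdiff (Set.finite_diff_sep_forall_lt N s)

variable {R : Finset ℕ → Set ℕ → Prop}

lemma Set.Infinite.exists_subset_forall_mem (hmono : ∀ s {A B : Set ℕ}, B ⊆ A → R s A → R s B)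
    (hR : ∀ s (A : Set ℕ), A.Infinite → ∃ B ⊆ A, B.Infinite ∧ R s B) {A : Set ℕ}
    (hA : A.Infinite) (S : Finset (Finset ℕ)) : ∃ B ⊆ A, B.Infinite ∧ ∀ s ∈ S, R s B := by
  induction S using Finset.induction_on with
  | empty => exact ⟨A, subset_rfl, hA, by simp⟩
  | insert s S _ ih =>
    obtain ⟨B, hBA, hB, hBS⟩ := ih
    obtain ⟨C, hCB, hC, hCs⟩ := hR s B hB
    refine ⟨C, hCB.trans hBA, hC, ?_⟩
    simpa [hCs] using fun t ht => hmono t hCB (hBS t ht)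

lemma Set.Infinite.exists_fusion_sequence (hmono : ∀ s {A B : Set ℕ}, B ⊆ A → R s A → R s B)
    (hR : ∀ s (A : Set ℕ), A.Infinite → ∃ B ⊆ A, B.Infinite ∧ R s B) {M : Set ℕ}
    (hM : M.Infinite) :
    ∃ (n : ℕ → ℕ) (A : ℕ → Set ℕ), StrictMono n ∧ Antitone A ∧ A 0 ⊆ M ∧ (∀ i, n i ∈ A i) ∧
      ∀ i, ∀ s ⊆ (Finset.range i).image n, R s (A i) := by
  have hnext (c : Finset ℕ) (A : Set ℕ) :
      ∃ B ⊆ A, A.Infinite → B.Infinite ∧ ∀ s ⊆ c, R s B := by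
    by_cases hA : A.Infinite
    · obtain ⟨B, hBA, hB, hBc⟩ := hA.exists_subset_forall_mem hmono hR c.powerset
      exact ⟨B, hBA, fun _ => ⟨hB, fun s hs => hBc s (Finset.mem_powerset.2 hs)⟩⟩
    · exact ⟨A, subset_rfl, fun h => absurd h hA⟩
  choose next hnext_sub hnext using hnext
  -- `stage i = ({n 0, …, n (i - 1)}, A i)` with `n i = min (A i)`
  let stage : ℕ → Finset ℕ × Set ℕ := fun i => Nat.rec (∅, next ∅ M)
    (fun _ p => (insert (sInf p.2) p.1, next (insert (sInf p.2) p.1) (p.2 \ Set.Iic (sInf p.2)))) i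
  set A : ℕ → Set ℕ := fun i => (stage i).2
  set n : ℕ → ℕ := fun i => sInf (A i)
  have hA_succ (i : ℕ) : A (i + 1) ⊆ A i \ Set.Iic (n i) := hnext_sub _ _
  have hstage (i : ℕ) : (stage i).1 = (Finset.range i).image n := by
    induction i with
    | zero => rfl
    | succ i ih => simp [stage, Finset.range_add_one, Finset.image_insert, ← ih]; rfl
  have hA (i : ℕ) : (A i).Infinite ∧ ∀ s ⊆ (Finset.range i).image n, R s (A i) := by
    induction i with
    | zero => exact hnext ∅ M hM
    | succ i ih =>
      rw [← hstage]
      exact hnext _ _ (ih.1.sdiff (Set.finite_Iic _))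
  have hn_mem (i : ℕ) : n i ∈ A i := Nat.sInf_mem (hA i).1.nonempty
  refine ⟨n, A, strictMono_nat_of_lt_succ fun i => ?_,
    antitone_nat_of_succ_le fun i => (hA_succ i).trans Set.sdiff_subset, hnext_sub ∅ M, hn_mem,
    fun i => (hA i).2⟩
  simpa using (hA_succ i (hn_mem (i + 1))).2

theorem Set.Infinite.exists_fusion (hmono : ∀ s {A B : Set ℕ}, B ⊆ A → R s A → R s B)
    (hR : ∀ s (A : Set ℕ), A.Infinite → ∃ B ⊆ A, B.Infinite ∧ R s B) {M : Set ℕ}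
    (hM : M.Infinite) :
    ∃ N ⊆ M, N.Infinite ∧ ∀ s : Finset ℕ, ↑s ⊆ N → R s {n ∈ N | ∀ m ∈ s, m < n} := by
  obtain ⟨n, A, hn, hA_anti, hA_M, hn_mem, hA⟩ := hM.exists_fusion_sequence hmono hR
  refine ⟨Set.range n, Set.range_subset_iff.2 fun i => hA_M (hA_anti (Nat.zero_le i) (hn_mem i)),
    Set.infinite_range_of_injective hn.injective, fun s hs => ?_⟩
  have hex : ∃ i, ∀ m ∈ s, m < n i :=
    ⟨s.sup id + 1, fun m hm => (Nat.lt_succ_of_le (le_sup (f := id) hm)).trans_le (hn.id_le _)⟩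
  refine hmono s (fun x hx => ?_) (hA (Nat.find hex) s fun m hm => ?_)
  · obtain ⟨j, rfl⟩ := hx.1
    exact hA_anti (not_lt.1 fun hj => Nat.find_min hex hj hx.2) (hn_mem j)
  · obtain ⟨j, rfl⟩ := hs hm
    exact Finset.mem_image_of_mem n (Finset.mem_range.2 (hn.lt_iff_lt.1 (Nat.find_spec hex _ hm)))

theorem Set.Infinite.exists_diagonal {P : ℕ → Set ℕ → Prop}
    (hmono : ∀ i {A B : Set ℕ}, B ⊆ A → P i A → P i B)
    (hP : ∀ i (A : Set ℕ), A.Infinite → ∃ B ⊆ A, B.Infinite ∧ P i B) {M : Set ℕ}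
    (hM : M.Infinite) : ∃ N ⊆ M, N.Infinite ∧ ∀ i, ∃ B ⊆ N, P i B ∧ (N \ B).Finite := by
  obtain ⟨N, hNM, hN, hNP⟩ := hM.exists_fusion (R := fun s => P #s)
    (fun s _ _ => hmono #s) (fun s => hP #s)
  refine ⟨N, hNM, hN, fun i => ?_⟩
  obtain ⟨s, hsN, rfl⟩ := hN.exists_subset_card_eq i
  exact ⟨_, Set.sep_subset _ _, hNP s hsN, Set.finite_diff_sep_forall_lt N s⟩

end Fusion

namespace NashWilliams

open Finset

variable (F : Set (Finset ℕ))

def Accepts (M : Set ℕ) (s : Finset ℕ) : Prop :=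
  ∀ u : ℕ → ℕ, StrictMono u → (∀ i, u i ∈ M) → (∀ i, ∀ m ∈ s, m < u i) →
    ∃ k, s ∪ (range k).image u ∈ F

def Rejects (M : Set ℕ) (s : Finset ℕ) : Prop :=
  ∀ N ⊆ M, N.Infinite → ¬Accepts F N s

variable {F}

lemma Accepts.mono {M N : Set ℕ} {s : Finset ℕ} (h : Accepts F M s) (hNM : N ⊆ M) :
    Accepts F N s :=
  fun u hu huN => h u hu fun i => hNM (huN i)

lemma Rejects.mono {M N : Set ℕ} {s : Finset ℕ} (h : Rejects F M s) (hNM : N ⊆ M) :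
    Rejects F N s :=
  fun Q hQN => h Q (hQN.trans hNM)

lemma Accepts.of_sep {M : Set ℕ} {s : Finset ℕ} (h : Accepts F {n ∈ M | ∀ m ∈ s, m < n} s) :
    Accepts F M s :=
  fun u hu huM hus => h u hu (fun i => ⟨huM i, hus i⟩) hus

lemma Rejects.of_sep {M : Set ℕ} {s : Finset ℕ} (h : Rejects F {n ∈ M | ∀ m ∈ s, m < n} s) :
    Rejects F M s := fun _ hNM hN hacc =>
  h _ (fun _ hn => ⟨hNM hn.1, hn.2⟩) (hN.sep_forall_lt s) (hacc.mono (Set.sep_subset _ _))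

lemma Rejects.notMem {M : Set ℕ} {s : Finset ℕ} (h : Rejects F M s) (hM : M.Infinite) :
    s ∉ F := fun hs => h M subset_rfl hM fun _ _ _ _ => ⟨0, by simpa using hs⟩

lemma exists_accepts_or_rejects (s : Finset ℕ) {M : Set ℕ} (hM : M.Infinite) :
    ∃ N ⊆ M, N.Infinite ∧ (Accepts F N s ∨ Rejects F N s) := by
  by_cases h : Rejects F M s
  · exact ⟨M, subset_rfl, hM, Or.inr h⟩
  · simp only [Rejects, not_forall, not_not] at h
    obtain ⟨N, hNM, hN, hacc⟩ := h
    exact ⟨N, hNM, hN, Or.inl hacc⟩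

lemma exists_decides {M : Set ℕ} (hM : M.Infinite) :
    ∃ N ⊆ M, N.Infinite ∧ ∀ s : Finset ℕ, ↑s ⊆ N → Accepts F N s ∨ Rejects F N s := by
  obtain ⟨N, hNM, hN, hdec⟩ := hM.exists_fusion (R := fun s B => Accepts F B s ∨ Rejects F B s)
    (fun _ _ _ hBA => Or.imp (·.mono hBA) (·.mono hBA))
    (fun s _ hA => exists_accepts_or_rejects s hA)
  exact ⟨N, hNM, hN, fun s hs => (hdec s hs).imp Accepts.of_sep Rejects.of_sep⟩

/-- Otherwise those `n` would form a set accepting `s`. -/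
lemma Rejects.finite_not_rejects_insert {N : Set ℕ} {s : Finset ℕ} (h : Rejects F N s)
    (hdec : ∀ n ∈ N, Accepts F N (insert n s) ∨ Rejects F N (insert n s)) :
    {n ∈ N | (∀ m ∈ s, m < n) ∧ ¬Rejects F N (insert n s)}.Finite := by
  by_contra hQ
  refine h _ (fun n hn => hn.1) hQ fun u hu huQ hus => ?_
  have hacc := (hdec _ (huQ 0).1).resolve_right (huQ 0).2.2
  have habove (i : ℕ) : ∀ m ∈ insert (u 0) s, m < u (i + 1) := by
    intro m hm
    rcases mem_insert.1 hm with rfl | hm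
    · exact hu i.succ_pos
    · exact hus _ m hm
  obtain ⟨k, hk⟩ := hacc (u ∘ Nat.succ) (fun i j hij => hu (Nat.succ_lt_succ hij))
    (fun i => (huQ _).1) habove
  refine ⟨k + 1, ?_⟩
  rwa [range_add_one', image_insert, map_eq_image, image_image, union_insert, ← insert_union]

lemma exists_forall_rejects {N : Set ℕ} (hN : N.Infinite)
    (hdec : ∀ s : Finset ℕ, ↑s ⊆ N → Accepts F N s ∨ Rejects F N s) (hrej : Rejects F N ∅) :
    ∃ N' ⊆ N, N'.Infinite ∧ ∀ s : Finset ℕ, ↑s ⊆ N' → Rejects F N s := by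
  have hR (s : Finset ℕ) (A : Set ℕ) (hA : A.Infinite) : ∃ B ⊆ A, B.Infinite ∧
      (↑s ⊆ N → Rejects F N s → ∀ n ∈ B, n ∈ N → (∀ m ∈ s, m < n) → Rejects F N (insert n s)) := by
    by_cases hs : ↑s ⊆ N ∧ Rejects F N s
    · refine ⟨A \ {n ∈ N | (∀ m ∈ s, m < n) ∧ ¬Rejects F N (insert n s)}, Set.sdiff_subset,
        hA.sdiff (hs.2.finite_not_rejects_insert fun n hn => hdec _ ?_), fun _ _ n hn hnN hns => ?_⟩
      · simpa using Set.insert_subset hn hs.1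
      · by_contra h
        exact hn.2 ⟨hnN, hns, h⟩
    · exact ⟨A, subset_rfl, hA, fun h h' => absurd ⟨h, h'⟩ hs⟩
  obtain ⟨N', hN'N, hN', hext⟩ := hN.exists_fusion
    (fun _ _ _ hBA h hs hrej n hn => h hs hrej n (hBA hn)) hR
  refine ⟨N', hN'N, hN', fun s => ?_⟩
  induction s using Finset.induction_on_max with
  | empty => exact fun _ => hrej
  | insert a s has ih =>
    intro hs
    rw [coe_insert, Set.insert_subset_iff] at hs
    exact hext s hs.2 (hs.2.trans hN'N) (ih hs.2) a ⟨hs.1, has⟩ (hN'N hs.1) has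

end NashWilliams

open Finset NashWilliams in
theorem nash_williams (F : Set (Finset ℕ)) {M : Set ℕ} (hM : M.Infinite) :
    (∃ N ⊆ M, N.Infinite ∧ ∀ s : Finset ℕ, ↑s ⊆ N → s ∉ F) ∨
      ∃ N ⊆ M, N.Infinite ∧
        ∀ u : ℕ → ℕ, StrictMono u → (∀ i, u i ∈ N) → ∃ k, (range k).image u ∈ F := by
  obtain ⟨N, hNM, hN, hdec⟩ := exists_decides (F := F) hM
  rcases hdec ∅ (by simp) with hacc | hrej
  · exact Or.inr ⟨N, hNM, hN, fun u hu huN => by simpa using hacc u hu huN (by simp)⟩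
  · obtain ⟨N', hN'N, hN', hrej'⟩ := exists_forall_rejects hN hdec hrej
    exact Or.inl ⟨N', hN'N.trans hNM, hN', fun s hs => (hrej' s hs).notMem hN⟩

section Independent

open Finset

variable {γ : Type*} (A B : ℕ → Set γ)

def AltMem (t : Finset ℕ) (x : γ) : Prop :=
  ∀ n ∈ t, x ∈ if Even #{m ∈ t | m < n} then A n else B n

lemma altMem_image_range_iff {v : ℕ → ℕ} (hv : StrictMono v) {k : ℕ} {x : γ} :
    AltMem A B ((range k).image v) x ↔ ∀ j < k, x ∈ if Even j then A (v j) else B (v j) := by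
  have hrank : ∀ j < k, #{m ∈ (range k).image v | m < v j} = j := by
    intro j hj
    rw [filter_image, card_image_of_injective _ hv.injective]
    simp_rw [hv.lt_iff_lt]
    rw [show {i ∈ range k | i < j} = range j by ext; simp; omega, card_range]
  simp only [AltMem, forall_mem_image, mem_range]
  exact forall₂_congr fun j hj => by rw [hrank j hj]

lemma exists_strictMono_forall_disjoint_of_forall_altMem {N : Set ℕ} (hN : N.Infinite)
    (hN_alt : ∀ t : Finset ℕ, ↑t ⊆ N → ∃ x, AltMem A B t x) :
    ∃ ρ : ℕ → ℕ, StrictMono ρ ∧ ∀ F G : Finset ℕ, Disjoint F G →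
      ∃ x, (∀ i ∈ F, x ∈ A (ρ i)) ∧ ∀ i ∈ G, x ∈ B (ρ i) := by
  set e := Nat.nth (· ∈ N)
  have he : StrictMono e := Nat.nth_strictMono hN
  refine ⟨fun i => e (3 * i + 1), fun i j hij => he (by omega), fun F G hFG => ?_⟩
  obtain ⟨m, hm⟩ : ∃ m, ∀ i ∈ F ∪ G, i < m :=
    ⟨(F ∪ G).sup id + 1, fun i hi => Nat.lt_succ_of_le (le_sup (f := id) hi)⟩
  -- `g` lists the pairs `{3i+1, 3i+2}` for `i ∈ F` and `{3i, 3i+1}` for `i ∉ F`, so that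
  -- `3i+1` has even rank exactly when `i ∈ F`
  set g : ℕ → ℕ := fun k => 3 * (k / 2) + (if k / 2 ∈ F then 1 else 0) + k % 2
  have hg : StrictMono g := strictMono_nat_of_lt_succ fun k => by
    obtain ⟨a, rfl | rfl⟩ := Nat.even_or_odd' k
    · have h₀ : 2 * a / 2 = a := by omega
      have h₁ : (2 * a + 1) / 2 = a := by omega
      simp only [g, h₀, h₁]; split_ifs <;> omega
    · have h₁ : (2 * a + 1 + 1) / 2 = a + 1 := by omega
      have h₂ : (2 * a + 1) / 2 = a := by omega
      simp only [g, h₁, h₂]; split_ifs <;> omega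
  obtain ⟨x, hx⟩ := hN_alt ((range (2 * m)).image (e ∘ g)) <| by
    simp only [coe_image, coe_range, Set.image_subset_iff]
    exact fun k _ => Nat.nth_mem_of_infinite hN (g k)
  rw [altMem_image_range_iff A B (he.comp hg)] at hx
  refine ⟨x, fun i hi => ?_, fun i hi => ?_⟩
  · have := hx (2 * i) (by have := hm i (mem_union_left G hi); omega)
    simpa [g, hi] using this
  · have hiF : i ∉ F := disjoint_right.1 hFG hi
    have := hx (2 * i + 1) (by have := hm i (mem_union_right F hi); omega)
    have h : (2 * i + 1) / 2 = i := by omega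
    simpa [g, h, hiF] using this

lemma exists_strictMono_forall_altMem {N : Set ℕ} {x : γ} (hA : {n ∈ N | x ∈ A n}.Infinite)
    (hB : {n ∈ N | x ∈ B n}.Infinite) :
    ∃ u : ℕ → ℕ, StrictMono u ∧ (∀ j, u j ∈ N) ∧ ∀ k, AltMem A B ((range k).image u) x := by
  obtain ⟨u, hu, hux⟩ := extraction_forall_of_frequently
    (P := fun j n => n ∈ if Even j then {n ∈ N | x ∈ A n} else {n ∈ N | x ∈ B n})
    fun j => by split_ifs <;> simpa [Nat.frequently_atTop_iff_infinite]
  refine ⟨u, hu, fun j => ?_, fun k => (altMem_image_range_iff A B hu).2 fun j _ => ?_⟩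
  · have := hux j
    split_ifs at this <;> exact this.1
  · have := hux j
    split_ifs at this ⊢ <;> exact this.2

theorem exists_strictMono_forall_disjoint {M : Set ℕ} (hM : M.Infinite)
    (hAB : ∀ N ⊆ M, N.Infinite → ∃ x, {n ∈ N | x ∈ A n}.Infinite ∧ {n ∈ N | x ∈ B n}.Infinite) :
    ∃ ρ : ℕ → ℕ, StrictMono ρ ∧ ∀ F G : Finset ℕ, Disjoint F G →
      ∃ x, (∀ i ∈ F, x ∈ A (ρ i)) ∧ ∀ i ∈ G, x ∈ B (ρ i) := by
  rcases nash_williams {t | ∀ x, ¬AltMem A B t x} hM with ⟨N, -, hN, hgood⟩ | ⟨N, hNM, hN, hbad⟩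
  · refine exists_strictMono_forall_disjoint_of_forall_altMem A B hN fun t ht => ?_
    by_contra! h
    exact hgood t ht h
  · obtain ⟨x, hxA, hxB⟩ := hAB N hNM hN
    obtain ⟨u, hu, huN, hux⟩ := exists_strictMono_forall_altMem A B hxA hxB
    obtain ⟨k, hk⟩ := hbad u hu huN
    exact (hk x (hux k)).elim

end Independent

section EllOne

open Finset

variable {X : Type*} [NormedAddCommGroup X] [NormedSpace ℝ X]

variable (X) in
def ContainsEllOne : Prop :=
  ∃ (T : lp (fun _ : ℕ => ℝ) 1 →L[ℝ] X) (c : ℝ), 0 < c ∧ ∀ v, c * ‖v‖ ≤ ‖T v‖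

def IsIndependent (y : ℕ → X) (r s : ℝ) : Prop :=
  ∀ F G : Finset ℕ, Disjoint F G → ∃ f ∈ closedBall (0 : StrongDual ℝ X) 1,
    (∀ i ∈ F, f (y i) < r) ∧ ∀ i ∈ G, s < f (y i)

lemma IsIndependent.mul_sum_abs_le {y : ℕ → X} {r s : ℝ} (hy : IsIndependent y r s)
    (S : Finset ℕ) (c : ℕ → ℝ) : (s - r) * ∑ i ∈ S, |c i| ≤ 2 * ‖∑ i ∈ S, c i • y i‖ := by
  have hdisj : Disjoint {i ∈ S | c i < 0} {i ∈ S | 0 ≤ c i} :=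
    disjoint_filter.2 fun _ _ h₁ h₂ => (not_le.2 h₁) h₂
  obtain ⟨f, hf, hf₁, hf₂⟩ := hy _ _ hdisj
  obtain ⟨g, hg, hg₁, hg₂⟩ := hy _ _ hdisj.symm
  rw [mem_closedBall_zero_iff] at hf hg
  -- `(f - g) (y i)` exceeds `s - r` where `c i ≥ 0` and lies below `r - s` where `c i < 0`
  calc (s - r) * ∑ i ∈ S, |c i| ≤ ∑ i ∈ S, c i * (f - g) (y i) := by
        rw [mul_sum]
        refine sum_le_sum fun i hi => ?_
        rw [sub_apply]
        rcases lt_or_ge (c i) 0 with hc | hc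
        · have := hf₁ i (mem_filter.2 ⟨hi, hc⟩)
          have := hg₂ i (mem_filter.2 ⟨hi, hc⟩)
          rw [abs_of_neg hc]
          nlinarith
        · have := hf₂ i (mem_filter.2 ⟨hi, hc⟩)
          have := hg₁ i (mem_filter.2 ⟨hi, hc⟩)
          rw [abs_of_nonneg hc]
          nlinarith
    _ = (f - g) (∑ i ∈ S, c i • y i) := by simp [map_sum, map_smul]
    _ ≤ ‖f - g‖ * ‖∑ i ∈ S, c i • y i‖ := (le_abs_self _).trans ((f - g).le_opNorm _)
    _ ≤ 2 * ‖∑ i ∈ S, c i • y i‖ := by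
        gcongr
        linarith [norm_sub_le f g]

theorem IsIndependent.containsEllOne [CompleteSpace X] {y : ℕ → X} {r s : ℝ}
    (hy : IsIndependent y r s) (hy₁ : ∀ i, ‖y i‖ ≤ 1) (hrs : r < s) : ContainsEllOne X := by
  have hnorm (v : lp (fun _ : ℕ => ℝ) 1) : HasSum (fun i => ‖v i‖) ‖v‖ := by
    simpa using lp.hasSum_norm (p := 1) (by norm_num) v
  have hbound (v : lp (fun _ : ℕ => ℝ) 1) (i : ℕ) : ‖v i • y i‖ ≤ ‖v i‖ := by
    rw [norm_smul]
    exact mul_le_of_le_one_right (norm_nonneg _) (hy₁ i)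
  have hsumm (v : lp (fun _ : ℕ => ℝ) 1) : Summable fun i => v i • y i :=
    (hnorm v).summable.of_norm_bounded (hbound v)
  let T : lp (fun _ : ℕ => ℝ) 1 →L[ℝ] X := LinearMap.mkContinuous
    { toFun v := ∑' i, v i • y i
      map_add' v w := by
        simp only [lp.coeFn_add, Pi.add_apply, add_smul]
        exact (hsumm v).tsum_add (hsumm w)
      map_smul' a v := by
        simp only [lp.coeFn_smul, Pi.smul_apply, smul_eq_mul, mul_smul]
        exact (hsumm v).tsum_const_smul a }
    1 fun v => by simpa using tsum_of_norm_bounded (hnorm v) (hbound v)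
  refine ⟨T, (s - r) / 2, by linarith, fun v => ?_⟩
  have hT : HasSum (fun i => v i • y i) (T v) := (hsumm v).hasSum
  have := le_of_tendsto_of_tendsto' ((hnorm v).tendsto_sum_nat.const_mul (s - r))
    (hT.tendsto_sum_nat.norm.const_mul 2) fun n => by simpa using hy.mul_sum_abs_le (range n) v
  linarith

end EllOne

section Rosenthal

variable {X : Type*} [NormedAddCommGroup X] [NormedSpace ℝ X]

def OscillatesOn (x : ℕ → X) (r s : ℝ) (N : Set ℕ) : Prop :=
  ∃ f ∈ closedBall (0 : StrongDual ℝ X) 1,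
    {n ∈ N | f (x n) < r}.Infinite ∧ {n ∈ N | s < f (x n)}.Infinite

lemma OscillatesOn.mono {x : ℕ → X} {r s : ℝ} {M N : Set ℕ} (h : OscillatesOn x r s N)
    (hNM : N ⊆ M) : OscillatesOn x r s M := by
  obtain ⟨f, hf, h₁, h₂⟩ := h
  exact ⟨f, hf, h₁.mono fun n hn => ⟨hNM hn.1, hn.2⟩, h₂.mono fun n hn => ⟨hNM hn.1, hn.2⟩⟩

lemma exists_not_oscillatesOn [CompleteSpace X] (hX : ¬ContainsEllOne X) {x : ℕ → X}
    (hx : ∀ n, ‖x n‖ ≤ 1) {r s : ℝ} (hrs : r < s) {M : Set ℕ} (hM : M.Infinite) :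
    ∃ N ⊆ M, N.Infinite ∧ ¬OscillatesOn x r s N := by
  by_contra! hosc
  obtain ⟨ρ, -, hρ⟩ := exists_strictMono_forall_disjoint
    (fun n => {f : closedBall (0 : StrongDual ℝ X) 1 | (f : StrongDual ℝ X) (x n) < r})
    (fun n => {f | s < (f : StrongDual ℝ X) (x n)}) hM fun N hNM hN => by
      obtain ⟨f, hf, h₁, h₂⟩ := hosc N hNM hN
      exact ⟨⟨f, hf⟩, h₁, h₂⟩
  refine hX (IsIndependent.containsEllOne (fun F G hFG => ?_) (fun i => hx (ρ i)) hrs)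
  obtain ⟨f, hF, hG⟩ := hρ F G hFG
  exact ⟨f, f.2, hF, hG⟩

lemma exists_tendsto_of_forall_closedBall {u : ℕ → X}
    (h : ∀ g ∈ closedBall (0 : StrongDual ℝ X) 1, ∃ L, Tendsto (fun n => g (u n)) atTop (𝓝 L))
    (f : StrongDual ℝ X) : ∃ L, Tendsto (fun n => f (u n)) atTop (𝓝 L) := by
  have hf : 0 < ‖f‖ + 1 := by positivity
  obtain ⟨L, hL⟩ := h ((‖f‖ + 1)⁻¹ • f) <| by
    rw [mem_closedBall_zero_iff, norm_smul, norm_inv, Real.norm_of_nonneg hf.le]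
    exact inv_mul_le_one_of_le₀ (by linarith) hf.le
  refine ⟨(‖f‖ + 1) * L, (hL.const_mul (‖f‖ + 1)).congr fun n => ?_⟩
  simp [hf.ne']

lemma infinite_sep_of_frequently {σ : ℕ → ℕ} (hσ : StrictMono σ) {N B : Set ℕ}
    (hσN : ∀ k, σ k ∈ N) (hNB : (N \ B).Finite) {p : ℕ → Prop} (h : ∃ᶠ k in atTop, p (σ k)) :
    {n ∈ B | p n}.Infinite := by
  refine (((Nat.frequently_atTop_iff_infinite.1 h).image hσ.injective.injOn).sdiff hNB).mono ?_
  rintro _ ⟨⟨k, hk, rfl⟩, hkB⟩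
  exact ⟨by_contra fun h => hkB ⟨hσN k, h⟩, hk⟩

/-- Rosenthal's `ℓ₁` theorem. -/
theorem exists_weakly_cauchy_subseq [CompleteSpace X] (hX : ¬ContainsEllOne X) {x : ℕ → X}
    (hx : ∀ n, ‖x n‖ ≤ 1) :
    ∃ σ : ℕ → ℕ, StrictMono σ ∧
      ∀ f : StrongDual ℝ X, ∃ L, Tendsto (fun k => f (x (σ k))) atTop (𝓝 L) := by
  obtain ⟨q, hq⟩ := exists_surjective_nat (ℚ × ℚ)
  have hP (i : ℕ) (A : Set ℕ) (hA : A.Infinite) : ∃ B ⊆ A, B.Infinite ∧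
      (((q i).1 : ℝ) < (q i).2 → ¬OscillatesOn x (q i).1 (q i).2 B) := by
    by_cases hlt : ((q i).1 : ℝ) < (q i).2
    · obtain ⟨B, hBA, hB, hosc⟩ := exists_not_oscillatesOn hX hx hlt hA
      exact ⟨B, hBA, hB, fun _ => hosc⟩
    · exact ⟨A, subset_rfl, hA, fun h => absurd h hlt⟩
  obtain ⟨N, -, hN, hNq⟩ := Set.infinite_univ.exists_diagonal
    (fun _ _ _ hBA h hq hosc => h hq (hosc.mono hBA)) hP
  set σ := Nat.nth (· ∈ N)
  have hσ : StrictMono σ := Nat.nth_strictMono hN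
  have hσN (k : ℕ) : σ k ∈ N := Nat.nth_mem_of_infinite hN k
  refine ⟨σ, hσ, exists_tendsto_of_forall_closedBall fun f hf => ?_⟩
  have hbdd (k : ℕ) : |f (x (σ k))| ≤ 1 := by
    rw [← Real.norm_eq_abs]
    exact (f.le_opNorm _).trans (mul_le_one₀ (mem_closedBall_zero_iff.1 hf) (norm_nonneg _) (hx _))
  refine tendsto_of_no_upcrossings Rat.denseRange_cast ?_
    (isBoundedUnder_of ⟨1, fun k => (abs_le.1 (hbdd k)).2⟩)
    (isBoundedUnder_of ⟨-1, fun k => (abs_le.1 (hbdd k)).1⟩)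
  rintro _ ⟨a, rfl⟩ _ ⟨b, rfl⟩ hab ⟨ha, hb⟩
  obtain ⟨i, hi⟩ := hq (a, b)
  obtain ⟨B, -, hB, hNB⟩ := hNq i
  simp only [hi] at hB
  exact hB hab ⟨f, hf, infinite_sep_of_frequently hσ hσN hNB ha,
    infinite_sep_of_frequently hσ hσN hNB hb⟩

end Rosenthal

section CaEstimate

variable {X : Type*} [NormedAddCommGroup X] [NormedSpace ℝ X]

lemma WeakSpace.isCompact_insert_zero_range {w : ℕ → X}
    (hw : ∀ f : StrongDual ℝ X, Tendsto (fun n => f (w n)) atTop (𝓝 0)) :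
    IsCompact (show Set (WeakSpace ℝ X) from insert 0 (Set.range w)) := by
  refine Tendsto.isCompact_insert_range ((WeakBilin.tendsto_iff_forall_eval_tendsto _ ?_).2 ?_)
  · exact fun x y hxy => SeparatingDual.eq_iff_forall_dual_eq.2 fun g => LinearMap.congr_fun hxy g
  · intro f
    rw [show (topDualPairing ℝ X).flip (0 : WeakSpace ℝ X) f = 0 from map_zero f]
    exact hw f

lemma exists_lt_abs_sub_apply {φ : ℕ → StrongDual ℝ X} {r : ℝ} (hr : r < ca φ) (m : ℕ) :
    ∃ j ≥ m, ∃ l ≥ m, ∃ z : X, ‖z‖ ≤ 1 ∧ r < |(φ j - φ l) z| := by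
  have hdiam : r < diam (φ '' Set.Ici m) :=
    hr.trans_le (ciInf_le ⟨0, Set.forall_mem_range.2 fun _ => diam_nonneg⟩ m)
  obtain ⟨_, ⟨j, hj, rfl⟩, _, ⟨l, hl, rfl⟩, hjl⟩ :
      ∃ a ∈ φ '' Set.Ici m, ∃ b ∈ φ '' Set.Ici m, r < dist a b := by
    by_contra! h
    exact hdiam.not_ge (diam_le_of_forall_dist_le_of_nonempty (Set.nonempty_Ici.image φ) h)
  rw [dist_eq_norm] at hjl
  obtain ⟨z, hz, hrz⟩ := (φ j - φ l).exists_lt_apply_of_lt_opNorm hjl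
  exact ⟨j, hj, l, hl, z, hz.le, hrz⟩

lemma Real.le_iSup₃ {α β δ : Sort*} {f : α → β → δ → ℝ} {B : ℝ} (hB : 0 ≤ B)
    (hf : ∀ a b c, f a b c ≤ B) (a : α) (b : β) (c : δ) : f a b c ≤ ⨆ a, ⨆ b, ⨆ c, f a b c :=
  le_ciSup_of_le ⟨B, Set.forall_mem_range.2 fun a =>
      Real.iSup_le (fun b => Real.iSup_le (hf a b) hB) hB⟩ a <|
    le_ciSup_of_le ⟨B, Set.forall_mem_range.2 fun b => Real.iSup_le (hf a b) hB⟩ b <|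
      le_ciSup ⟨B, Set.forall_mem_range.2 (hf a b)⟩ c

lemma abs_sub_apply_le {φ : ℕ → StrongDual ℝ X} {M : ℝ} (hM : ∀ k, ‖φ k‖ ≤ M) (j l : ℕ) {v : X}
    (hv : ‖v‖ ≤ 1) : |(φ j - φ l) v| ≤ 2 * M :=
  calc |(φ j - φ l) v| ≤ ‖φ j - φ l‖ * ‖v‖ := (φ j - φ l).le_opNorm v
    _ ≤ (‖φ j‖ + ‖φ l‖) * 1 := by gcongr; exact norm_sub_le _ _
    _ ≤ 2 * M := by linarith [hM j, hM l]

lemma exists_forall_abs_sub_apply_lt {φ : ℕ → StrongDual ℝ X} {M : ℝ} (hM : ∀ k, ‖φ k‖ ≤ M)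
    {K : Set X} (hK : K ⊆ closedBall 0 1) (hKc : IsCompact (show Set (WeakSpace ℝ X) from K))
    {ε : ℝ} (hε : 0 < ε) :
    ∃ n, ∀ j ≥ n, ∀ l ≥ n, ∀ v ∈ K, |(φ j - φ l) v| < caRhoStar φ + ε := by
  have hM₀ : 0 ≤ 2 * M := by linarith [(norm_nonneg _).trans (hM 0)]
  have hterm {K : Set X} (hK : K ⊆ closedBall 0 1) (j l : ℕ) (v : K) :
      |(φ j - φ l) (v : X)| ≤ 2 * M :=
    abs_sub_apply_le hM j l (mem_closedBall_zero_iff.1 (hK v.2))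
  have hbdd : BddAbove {r : ℝ | ∃ K : Set X, K ⊆ closedBall 0 1 ∧
      IsCompact (show Set (WeakSpace ℝ X) from K) ∧
      r = ⨅ n : ℕ, ⨆ j : Set.Ici n, ⨆ l : Set.Ici n, ⨆ v : K, |(φ j - φ l) (v : X)|} := by
    refine ⟨2 * M, ?_⟩
    rintro _ ⟨K, hK, -, rfl⟩
    refine ciInf_le_of_le ⟨0, Set.forall_mem_range.2 fun n => ?_⟩ 0 ?_
    · exact Real.iSup_nonneg fun j => Real.iSup_nonneg fun l => Real.iSup_nonneg fun v =>
        abs_nonneg _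
    · exact Real.iSup_le (fun j => Real.iSup_le (fun l => Real.iSup_le (hterm hK j l) hM₀) hM₀) hM₀
  obtain ⟨n, hn⟩ := exists_lt_of_ciInf_lt
    ((le_csSup hbdd ⟨K, hK, hKc, rfl⟩).trans_lt (lt_add_of_pos_right (caRhoStar φ) hε))
  exact ⟨n, fun j hj l hl v hv =>
    (Real.le_iSup₃ (f := fun (j l : Set.Ici n) (v : K) => |(φ j - φ l) (v : X)|) hM₀
      (fun j l => hterm hK j l) ⟨j, hj⟩ ⟨l, hl⟩ ⟨v, hv⟩).trans_lt hn⟩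

lemma ca_le_three_mul_caRhoStar_add [CompleteSpace X] (hX : ¬ContainsEllOne X)
    {φ : ℕ → StrongDual ℝ X} {M : ℝ} (hM : ∀ k, ‖φ k‖ ≤ M) {ε : ℝ} (hε : 0 < ε) :
    ca φ ≤ 3 * (caRhoStar φ + ε) := by
  refine le_of_forall_lt_imp_le_of_dense fun r hr => ?_
  choose j hj l hl z hz hrz using exists_lt_abs_sub_apply hr
  obtain ⟨σ, hσ, hσf⟩ := exists_weakly_cauchy_subseq hX hz
  set a := fun p => z (σ p)
  choose N hN using fun p => exists_forall_abs_sub_apply_lt hM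
    (Set.singleton_subset_iff.2 (mem_closedBall_zero_iff.2 (hz (σ p))))
    (isCompact_singleton (X := WeakSpace ℝ X)) hε
  set τ := fun i => max (N i) i
  set w := fun i => (2 : ℝ)⁻¹ • (a (τ i) - a i)
  have hw (i : ℕ) : w i ∈ closedBall (0 : X) 1 := by
    rw [mem_closedBall_zero_iff]
    simp only [w, norm_smul, norm_inv, Real.norm_ofNat]
    linarith [norm_sub_le (a (τ i)) (a i), hz (σ (τ i)), hz (σ i)]
  have hw_null (f : StrongDual ℝ X) : Tendsto (fun i => f (w i)) atTop (𝓝 0) := by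
    obtain ⟨L, hL⟩ := hσf f
    have hτ : Tendsto τ atTop atTop := tendsto_atTop_mono (fun i => le_max_right _ _) tendsto_id
    simpa [w] using ((hL.comp hτ).sub hL).const_mul (2 : ℝ)⁻¹
  obtain ⟨n, hn⟩ := exists_forall_abs_sub_apply_lt hM
    (Set.insert_subset (mem_closedBall_self zero_le_one) (Set.range_subset_iff.2 hw))
    (WeakSpace.isCompact_insert_zero_range hw_null) hε
  set m := σ (τ n)
  set ψ := φ (j m) - φ (l m)
  have hm : max (N n) n ≤ m := hσ.id_le _
  have h₁ := hN n (j m) (by grind) (l m) (by grind) (a n) rfl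
  have h₂ := hn (j m) (by grind) (l m) (by grind) (w n) (Set.mem_insert_of_mem _ ⟨n, rfl⟩)
  have hsplit : ψ (z m) = 2 * ψ (w n) + ψ (a n) := by simp [w, a, m, τ]
  refine le_of_lt ?_
  calc r < |ψ (z m)| := hrz m
    _ = |2 * ψ (w n) + ψ (a n)| := by rw [hsplit]
    _ ≤ 2 * |ψ (w n)| + |ψ (a n)| := (abs_add_le _ _).trans_eq (by rw [abs_mul, abs_two])
    _ ≤ 3 * (caRhoStar φ + ε) := by linarith

end CaEstimate

/-- **Lemma 2.5.** If a Banach space `X` contains no isomorphic copy of `ℓ₁`, then every bounded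
sequence `(x*_n)` in `X*` satisfies `ca (x*_n) ≤ 3·ca_{ρ*} (x*_n)`. -/
theorem ca_le_three_caRhoStar_of_no_ell1 {X : Type*}
    [NormedAddCommGroup X] [NormedSpace ℝ X] [CompleteSpace X]
    (hX : ¬ ∃ (T : lp (fun _ : ℕ => ℝ) 1 →L[ℝ] X) (c : ℝ),
        0 < c ∧ ∀ v : lp (fun _ : ℕ => ℝ) 1, c * ‖v‖ ≤ ‖T v‖)
    (φ : ℕ → StrongDual ℝ X) (hφ : ∃ M : ℝ, ∀ k, ‖φ k‖ ≤ M) :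
    ca φ ≤ 3 * caRhoStar φ := by
  obtain ⟨M, hM⟩ := hφ
  refine le_of_forall_pos_le_add fun ε hε => ?_
  have := ca_le_three_mul_caRhoStar_add hX hM (div_pos hε three_pos)
  linarith
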